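/- Let Ω be a countably infinite set and S = Sym(Ω). Then S_(A) ≈ S_(B) for all A, B ∈ 𝒫; that is, the subgroups determined by partitions of Ω into finite sets of unbounded cardinality are mutually ≈-equivalent. -/

import Mathlib

open scoped Cardinal ENNReal

universe u

variable {Ω : Type u}

/-- The pointwise stabilizer of a set `s` inside a subgroup `G` of `Sym(Ω)`. -/
def pstab (G : Subgroup (Equiv.Perm Ω)) (s : Set Ω) : Subgroup (Equiv.Perm Ω) where
  carrier := {g | g ∈ G ∧ ∀ x ∈ s, g x = x}
  one_mem' := ⟨G.one_mem, fun _ _ => rfl⟩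
  mul_mem' := by
    rintro a b ⟨haG, ha⟩ ⟨hbG, hb⟩
    refine ⟨G.mul_mem haG hbG, fun x hx => ?_⟩
    simp [Equiv.Perm.mul_apply, hb x hx, ha x hx]
  inv_mem' := by
    rintro a ⟨haG, ha⟩
    refine ⟨G.inv_mem haG, fun x hx => ?_⟩
    conv_lhs => rw [← ha x hx]
    exact Equiv.symm_apply_apply a x

/-- For a family `A` of subsets of `Ω`, the subgroup of permutations carrying each
member of `A` onto itself. -/
def SAgrp (A : Set (Set Ω)) : Subgroup (Equiv.Perm Ω) where
  carrier := {f | ∀ s ∈ A, (f : Ω → Ω) '' s = s}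
  one_mem' := fun s _ => by simp
  mul_mem' := by
    intro a b ha hb s hs
    rw [Equiv.Perm.coe_mul, Set.image_comp, hb s hs, ha s hs]
  inv_mem' := by
    intro a ha s hs
    conv_lhs => rw [← ha s hs]
    rw [← Set.image_comp]
    simp

/-- `G₁ ≼_κ G₂` : there is a set `U` of permutations of cardinality `< κ` with
`G₁ ≤ ⟨G₂ ∪ U⟩`. -/
def Prec (κ : Cardinal.{u}) (G₁ G₂ : Subgroup (Equiv.Perm Ω)) : Prop :=
  ∃ U : Set (Equiv.Perm Ω), #U < κ ∧
    G₁ ≤ Subgroup.closure ((G₂ : Set (Equiv.Perm Ω)) ∪ U)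

/-- `G₁ ≈_κ G₂`. -/
def CApprox (κ : Cardinal.{u}) (G₁ G₂ : Subgroup (Equiv.Perm Ω)) : Prop :=
  Prec κ G₁ G₂ ∧ Prec κ G₂ G₁

/-- `G₁ ≼ G₂` (i.e. `≼_{ℵ₀}`, with `U` finite). -/
def PrecF (G₁ G₂ : Subgroup (Equiv.Perm Ω)) : Prop :=
  ∃ U : Set (Equiv.Perm Ω), U.Finite ∧
    G₁ ≤ Subgroup.closure ((G₂ : Set (Equiv.Perm Ω)) ∪ U)

/-- `G₁ ≈ G₂` (i.e. `≈_{ℵ₀}`). -/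
def ApproxF (G₁ G₂ : Subgroup (Equiv.Perm Ω)) : Prop :=
  PrecF G₁ G₂ ∧ PrecF G₂ G₁

/-- A generalized metric: a `[0,∞]`-valued metric. -/
structure IsGenMetric (d : Ω → Ω → ℝ≥0∞) : Prop where
  eq_zero_iff : ∀ α β, d α β = 0 ↔ α = β
  symm : ∀ α β, d α β = d β α
  triangle : ∀ α β γ, d α γ ≤ d α β + d β γ

/-- Open ball for a generalized metric. -/
def gball (d : Ω → Ω → ℝ≥0∞) (α : Ω) (r : ℝ≥0∞) : Set Ω := {β | d α β < r}

/-- `(Ω, d)` is `κ`-uncrowded: every ball of finite radius has `< κ` elements. -/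
def Uncrowded (κ : Cardinal.{u}) (d : Ω → Ω → ℝ≥0∞) : Prop :=
  ∀ (α : Ω) (r : ℝ≥0∞), r < ⊤ → #(gball d α r) < κ

/-- `(Ω, d)` is uniformly `κ`-uncrowded. -/
def UnifUncrowded (κ : Cardinal.{u}) (d : Ω → Ω → ℝ≥0∞) : Prop :=
  ∀ r : ℝ≥0∞, r < ⊤ → ∃ lam : Cardinal.{u}, lam < κ ∧ ∀ α : Ω, #(gball d α r) ≤ lam

/-- `g` is bounded with respect to `d` : `‖g‖_d = ⨆ α, d α (αg) < ∞`. -/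
def BoundedPerm (d : Ω → Ω → ℝ≥0∞) (g : Equiv.Perm Ω) : Prop :=
  (⨆ α : Ω, d α (g α)) < ⊤

/-- The function topology on `Sym(Ω)`: induced from the product topology on `Ω → Ω`
with `Ω` discrete. -/
def permTop (Ω : Type u) : TopologicalSpace (Equiv.Perm Ω) :=
  TopologicalSpace.induced (fun g : Equiv.Perm Ω => (g : Ω → Ω))
    (@Pi.topologicalSpace Ω (fun _ => Ω) (fun _ => ⊥))

/-- `G` is closed in `Sym(Ω)` in the function topology. -/
def FTClosed (G : Subgroup (Equiv.Perm Ω)) : Prop :=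
  @IsClosed _ (permTop Ω) (G : Set (Equiv.Perm Ω))

/-- `G` is discrete in the function topology. -/
def FTDiscrete (G : Subgroup (Equiv.Perm Ω)) : Prop :=
  @DiscreteTopology G
    (TopologicalSpace.induced (fun x : G => (x : Equiv.Perm Ω)) (permTop Ω))

/-- The orbit of `α` under a subgroup `H ≤ Sym(Ω)`. -/
def orb (H : Subgroup (Equiv.Perm Ω)) (α : Ω) : Set Ω := {β | ∃ g ∈ H, g α = β}

/-- A partition of `Ω`: a set of disjoint nonempty subsets with union `Ω`. -/
def IsPartition (A : Set (Set Ω)) : Prop :=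
  (∀ s ∈ A, s.Nonempty) ∧ A.PairwiseDisjoint id ∧ ⋃₀ A = Set.univ

/-- `A ∈ 𝒫`: a partition of `Ω` into finite subsets of unbounded cardinality. -/
def MemP (A : Set (Set Ω)) : Prop :=
  IsPartition A ∧ (∀ s ∈ A, s.Finite) ∧ ∀ n : ℕ, ∃ s ∈ A, (n : ℕ∞) < s.encard

/-- `A ∈ 𝒬`: a partition of `Ω` with a common finite bound on the cardinalities of
its members, infinitely many of which have more than one element. -/
def MemQ (A : Set (Set Ω)) : Prop :=
  IsPartition A ∧ (∃ n : ℕ, ∀ s ∈ A, s.encard ≤ (n : ℕ∞)) ∧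
    {s | s ∈ A ∧ 1 < s.encard}.Infinite

/-- The subgroup `FN(Ω,d)` of permutations of finite norm with respect to a
generalized metric `d`. -/
def FN (d : Ω → Ω → ℝ≥0∞) (hd : IsGenMetric d) : Subgroup (Equiv.Perm Ω) where
  carrier := {g | (⨆ α : Ω, d α (g α)) < ⊤}
  one_mem' := by
    have h : (⨆ α : Ω, d α ((1 : Equiv.Perm Ω) α)) ≤ 0 :=
      iSup_le fun α => le_of_eq ((hd.eq_zero_iff α ((1 : Equiv.Perm Ω) α)).2 rfl)
    exact lt_of_le_of_lt h (by simp)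
  mul_mem' := by
    intro a b ha hb
    have h : (⨆ α : Ω, d α ((a * b) α)) ≤
        (⨆ α : Ω, d α (b α)) + (⨆ α : Ω, d α (a α)) := by
      refine iSup_le fun α => ?_
      calc d α ((a * b) α) = d α (a (b α)) := by rw [Equiv.Perm.mul_apply]
        _ ≤ d α (b α) + d (b α) (a (b α)) := hd.triangle _ _ _
        _ ≤ _ := add_le_add (le_iSup (fun α : Ω => d α (b α)) α)
              (le_iSup (fun β : Ω => d β (a β)) (b α))
    exact lt_of_le_of_lt h (ENNReal.add_lt_top.2 ⟨hb, ha⟩)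
  inv_mem' := by
    intro a ha
    have h : (⨆ α : Ω, d α (a⁻¹ α)) ≤ ⨆ β : Ω, d β (a β) := by
      refine iSup_le fun α => ?_
      have e : d α (a⁻¹ α) = d (a⁻¹ α) (a (a⁻¹ α)) := by
        rw [Equiv.Perm.inv_def, Equiv.apply_symm_apply]; exact hd.symm _ _
      rw [e]
      exact le_iSup (fun β : Ω => d β (a β)) (a⁻¹ α)
    exact lt_of_le_of_lt h ha

/-!
Split the blocks of `A` into two infinite families, with unions `Ω₁` and `Ω₂ = Ω₁ᶜ`. As the
blocks of `B` are finite of unbounded size, for `i = 1, 2` there is a permutation `gᵢ` mapping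
the blocks of `A` inside `Ωᵢ` into pairwise distinct, strictly larger blocks of `B`; strictness
leaves infinitely many points outside the image, which is what lets the partial injection extend
to a permutation of `Ω`. Every `f ∈ S_(A)` factors as `f₁ f₂` with `fᵢ` preserving the blocks of
`A` and fixing `Ωᵢᶜ` pointwise; then `gᵢ fᵢ gᵢ⁻¹ ∈ S_(B)`, whence `S_(A) ≤ ⟨S_(B) ∪ {g₁, g₂}⟩`.
-/

open Set Function Equiv

theorem Subgroup.mem_closure_union_of_conj_mem {G : Type*} [Group G] {H : Subgroup G}
    {U : Set G} {f g : G} (hg : g ∈ U) (hconj : g * f * g⁻¹ ∈ H) :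
    f ∈ closure ((H : Set G) ∪ U) := by
  have hg' : g ∈ closure ((H : Set G) ∪ U) := subset_closure (Or.inr hg)
  have hconj' : g * f * g⁻¹ ∈ closure ((H : Set G) ∪ U) := subset_closure (Or.inl hconj)
  exact (mul_mem_cancel_left hg').1 ((mul_mem_cancel_right (inv_mem hg')).1 hconj')

section Packing

variable {α β : Type*}

theorem exists_mem_mapsTo_diff_singleton_injOn {s : Set α} {t : Set β}
    (h : s.encard < t.encard) : ∃ p ∈ t, ∃ φ : α → β, MapsTo φ s (t \ {p}) ∧ InjOn φ s := by
  obtain ⟨p, hp⟩ := encard_pos.1 (h.trans_le' bot_le)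
  have : Nonempty β := ⟨p⟩
  have hle : s.encard ≤ (t \ {p}).encard := by
    rwa [← encard_sdiff_singleton_add_one hp, ENat.lt_add_one_iff' h.ne_top] at h
  obtain ⟨φ, hmaps, hinj⟩ := (encard_ne_top_iff.1 h.ne_top).exists_injOn_of_encard_le hle
  exact ⟨p, hp, φ, hmaps, hinj⟩

theorem exists_injOn_iUnion_mapsTo [Nonempty β] {ι : Type*} {a : ι → Set α} {t : ι → Set β}
    (ha : Pairwise (Disjoint on a)) (ht : Pairwise (Disjoint on t)) (φ : ι → α → β)
    (hmaps : ∀ i, MapsTo (φ i) (a i) (t i)) (hinj : ∀ i, InjOn (φ i) (a i)) :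
    ∃ ψ : α → β, (∀ i, MapsTo ψ (a i) (t i)) ∧ InjOn ψ (⋃ i, a i) := by
  classical
  let ψ : α → β := fun x => if h : ∃ i, x ∈ a i then φ h.choose x else Classical.arbitrary β
  have hψ : ∀ i, ∀ x ∈ a i, ψ x = φ i x := fun i x hx => by
    have h : ∃ i, x ∈ a i := ⟨i, hx⟩
    obtain rfl : h.choose = i := ha.eq (not_disjoint_iff.2 ⟨x, h.choose_spec, hx⟩)
    exact dif_pos h
  have hψmaps : ∀ i, MapsTo ψ (a i) (t i) := fun i x hx => hψ i x hx ▸ hmaps i hx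
  refine ⟨ψ, hψmaps, fun x hx y hy hxy => ?_⟩
  obtain ⟨i, hxi⟩ := mem_iUnion.1 hx
  obtain ⟨j, hyj⟩ := mem_iUnion.1 hy
  obtain rfl : i = j :=
    ht.eq (not_disjoint_iff.2 ⟨ψ x, hψmaps i hxi, hxy ▸ hψmaps j hyj⟩)
  rw [hψ i x hxi, hψ i y hyj] at hxy
  exact hinj i hxi hyj hxy

theorem exists_perm_eqOn [Countable α] {s : Set α} {φ : α → α} (hφ : InjOn φ s)
    (hs : sᶜ.Infinite) (hφs : (φ '' s)ᶜ.Infinite) : ∃ g : Perm α, EqOn g φ s := by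
  classical
  have := hs.to_subtype
  have := hφs.to_subtype
  obtain ⟨e⟩ : Nonempty (↥sᶜ ≃ ↥(φ '' s)ᶜ) := nonempty_equiv_of_countable
  refine ⟨Equiv.subtypeCongr (Equiv.Set.imageOfInjOn φ s hφ) e, fun x hx => ?_⟩
  simp only [Equiv.subtypeCongr, trans_apply, Equiv.sumCompl_symm_apply_of_pos hx, sumCongr_apply,
    Sum.map_inl, sumCompl_apply_inl]
  rfl

end Packing

section Stabilizers

variable {A B : Set (Set Ω)} {f g : Perm Ω}

theorem mem_SAgrp_iff_forall_mem_iff :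
    f ∈ SAgrp A ↔ ∀ s ∈ A, ∀ x, f x ∈ s ↔ x ∈ s := by
  refine forall₂_congr fun s _ => ?_
  rw [eq_comm, ← f.preimage_eq_iff_eq_image, Set.ext_iff]
  rfl

theorem conj_mem_SAgrp (hB : B.PairwiseDisjoint id)
    (h : ∀ x, f x ≠ x → ∃ b ∈ B, g x ∈ b ∧ g (f x) ∈ b) : g * f * g⁻¹ ∈ SAgrp B := by
  refine mem_SAgrp_iff_forall_mem_iff.2 fun b hb y => ?_
  obtain ⟨x, rfl⟩ := g.surjective y
  simp only [Perm.mul_apply, Perm.inv_def, symm_apply_apply]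
  by_cases hfx : f x = x
  · rw [hfx]
  obtain ⟨b', hb', hx, hfx⟩ := h x hfx
  have mem_iff : ∀ z ∈ b', z ∈ b ↔ b = b' := fun z hz =>
    ⟨fun hzb => hB.elim_set hb hb' z hzb hz, fun h => h ▸ hz⟩
  rw [mem_iff _ hfx, mem_iff _ hx]

theorem mem_pstab_sup_pstab {T : Set Ω} (hf : f ∈ SAgrp A) (hT : ∀ x, f x ∈ T ↔ x ∈ T) :
    f ∈ pstab (SAgrp A) Tᶜ ⊔ pstab (SAgrp A) T := by
  classical
  set f₁ : Perm Ω := Perm.ofSubtype (f.subtypePerm hT)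
  have hf₁_mem : ∀ x ∈ T, f₁ x = f x := fun x hx => Perm.ofSubtype_apply_of_mem _ hx
  have hf₁_not_mem : ∀ x ∉ T, f₁ x = x := fun x hx => Perm.ofSubtype_apply_of_not_mem _ hx
  have hf₁ : f₁ ∈ pstab (SAgrp A) Tᶜ := by
    refine ⟨mem_SAgrp_iff_forall_mem_iff.2 fun s hs x => ?_, hf₁_not_mem⟩
    by_cases hx : x ∈ T
    · rw [hf₁_mem x hx]; exact mem_SAgrp_iff_forall_mem_iff.1 hf s hs x
    · rw [hf₁_not_mem x hx]
  have hf₂ : f₁⁻¹ * f ∈ pstab (SAgrp A) T := by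
    refine ⟨(SAgrp A).mul_mem ((SAgrp A).inv_mem hf₁.1) hf, fun x hx => ?_⟩
    rw [Perm.mul_apply, Perm.inv_eq_iff_eq, hf₁_mem x hx]
  simpa using Subgroup.mul_mem_sup hf₁ hf₂

theorem mem_iUnion_iff_of_mem_SAgrp {ι : Type*} {a : ι → Set Ω} (hf : f ∈ SAgrp A)
    (haA : ∀ i, a i ∈ A) (x : Ω) : f x ∈ ⋃ i, a i ↔ x ∈ ⋃ i, a i := by
  simp only [mem_iUnion]
  exact exists_congr fun i => mem_SAgrp_iff_forall_mem_iff.1 hf _ (haA i) x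

theorem conj_mem_SAgrp_of_mem_pstab {ι : Type*} {a : ι → Set Ω} (hB : B.PairwiseDisjoint id)
    (haA : ∀ i, a i ∈ A) (hg : ∀ i, ∃ b ∈ B, MapsTo g (a i) b)
    (hf : f ∈ pstab (SAgrp A) (⋃ i, a i)ᶜ) : g * f * g⁻¹ ∈ SAgrp B := by
  refine conj_mem_SAgrp hB fun x hfx => ?_
  obtain ⟨i, hxi⟩ := mem_iUnion.1 (not_not.1 fun hx => hfx (hf.2 x hx))
  obtain ⟨b, hb, hgb⟩ := hg i
  exact ⟨b, hb, hgb hxi, hgb ((mem_SAgrp_iff_forall_mem_iff.1 hf.1 _ (haA i) x).2 hxi)⟩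

theorem pstab_compl_iUnion_le_closure {ι : Type*} {a : ι → Set Ω} {U : Set (Perm Ω)}
    (hB : B.PairwiseDisjoint id) (haA : ∀ i, a i ∈ A) (hgU : g ∈ U)
    (hg : ∀ i, ∃ b ∈ B, MapsTo g (a i) b) :
    pstab (SAgrp A) (⋃ i, a i)ᶜ ≤ Subgroup.closure ((SAgrp B : Set (Perm Ω)) ∪ U) :=
  fun _ hf =>
    Subgroup.mem_closure_union_of_conj_mem hgU (conj_mem_SAgrp_of_mem_pstab hB haA hg hf)

end Stabilizers

theorem exists_pairwise_disjoint_encard_gt {B : Set (Set Ω)} (hBd : B.PairwiseDisjoint id)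
    (hBfin : ∀ b ∈ B, b.Finite) (hBbig : ∀ n : ℕ, ∃ b ∈ B, (n : ℕ∞) < b.encard) (k : ℕ → ℕ) :
    ∃ F : ℕ → Set Ω, (∀ n, F n ∈ B) ∧ Pairwise (Disjoint on F) ∧
      ∀ n, (k n : ℕ∞) < (F n).encard := by
  have hfreq : ∀ n, ∃ᶠ m in Filter.atTop, k n < m ∧ ∃ b ∈ B, (m : ℕ∞) = b.encard := by
    refine fun n => Filter.frequently_atTop.2 fun m₀ => ?_
    obtain ⟨b, hb, hlt⟩ := hBbig (max m₀ (k n))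
    rw [← (hBfin b hb).cast_ncard_eq, Nat.cast_lt, max_lt_iff] at hlt
    exact ⟨b.ncard, hlt.1.le, hlt.2, b, hb, (hBfin b hb).cast_ncard_eq⟩
  obtain ⟨φ, hφ, hF⟩ := Filter.extraction_forall_of_frequently hfreq
  choose hlt F hFB hFcard using hF
  refine ⟨F, hFB, fun m n hmn => hBd (hFB m) (hFB n) fun hFmn => hmn (hφ.injective ?_), ?_⟩
  · exact_mod_cast (hFcard m).trans ((congrArg encard hFmn).trans (hFcard n).symm)
  · exact fun n => hFcard n ▸ Nat.cast_lt.2 (hlt n)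

theorem exists_perm_forall_exists_mapsTo [Countable Ω] {a : ℕ → Set Ω}
    (ha : Pairwise (Disjoint on a)) (hfin : ∀ n, (a n).Finite) (hcompl : (⋃ n, a n)ᶜ.Infinite)
    {B : Set (Set Ω)} (hBd : B.PairwiseDisjoint id) (hBfin : ∀ b ∈ B, b.Finite)
    (hBbig : ∀ n : ℕ, ∃ b ∈ B, (n : ℕ∞) < b.encard) :
    ∃ g : Perm Ω, ∀ n, ∃ b ∈ B, MapsTo g (a n) b := by
  obtain ⟨F, hFB, hFd, hFcard⟩ :=
    exists_pairwise_disjoint_encard_gt hBd hBfin hBbig fun n => (a n).ncard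
  have hφ : ∀ n, ∃ p ∈ F n, ∃ φ : Ω → Ω, MapsTo φ (a n) (F n \ {p}) ∧ InjOn φ (a n) :=
    fun n => exists_mem_mapsTo_diff_singleton_injOn ((hfin n).cast_ncard_eq ▸ hFcard n)
  choose p hpF φ hφmaps hφinj using hφ
  have : Nonempty Ω := ⟨p 0⟩
  obtain ⟨ψ, hψmaps, hψinj⟩ := exists_injOn_iUnion_mapsTo ha
    (fun m n hmn => (hFd hmn).mono sdiff_subset sdiff_subset) φ hφmaps hφinj
  have hp_inj : Injective p := fun m n hpmn =>
    hFd.eq (not_disjoint_iff.2 ⟨p m, hpF m, hpmn ▸ hpF n⟩)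
  have hp_not_mem : ∀ n, p n ∉ ψ '' ⋃ m, a m := by
    rintro n ⟨x, hx, hψx⟩
    obtain ⟨m, hxm⟩ := mem_iUnion.1 hx
    obtain ⟨hψxF, hψxp⟩ := hψmaps m hxm
    obtain rfl : m = n := hFd.eq (not_disjoint_iff.2 ⟨p n, hψx ▸ hψxF, hpF n⟩)
    exact hψxp hψx
  obtain ⟨g, hg⟩ := exists_perm_eqOn hψinj hcompl
    (infinite_of_injective_forall_mem hp_inj hp_not_mem)
  exact ⟨g, fun n => ⟨F n, hFB n, fun x hx => hg (mem_iUnion_of_mem n hx) ▸ (hψmaps n hx).1⟩⟩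

section Partitions

variable {A : Set (Set Ω)}

theorem IsPartition.countable [Countable Ω] (hA : IsPartition A) : A.Countable := by
  choose x hx using fun s : A => hA.1 s s.2
  have hx_inj : Injective x := fun s t hst =>
    Subtype.ext (hA.2.1.elim_set s.2 t.2 _ (hx s) (hst ▸ hx t))
  exact countable_coe_iff.1 hx_inj.countable

theorem IsPartition.infinite [Infinite Ω] (hA : IsPartition A) (hfin : ∀ s ∈ A, s.Finite) :
    A.Infinite :=
  fun h => infinite_univ (hA.2.2 ▸ h.sUnion hfin)

theorem compl_iUnion_inl_eq_iUnion_inr {ι κ : Type*} {a : ι ⊕ κ → Set Ω}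
    (ha : Pairwise (Disjoint on a)) (hcover : ⋃ i, a i = univ) :
    (⋃ i, a (.inl i))ᶜ = ⋃ j, a (.inr j) := by
  refine IsCompl.compl_eq ⟨?_, ?_⟩
  · simp only [disjoint_iUnion_left, disjoint_iUnion_right]
    exact fun i j => ha Sum.inl_ne_inr
  · exact codisjoint_iff.2 ((iUnion_sum ..).symm.trans hcover)

end Partitions

theorem precF_SAgrp_of_memP [Countable Ω] [Infinite Ω] {A B : Set (Set Ω)}
    (hA : MemP A) (hB : MemP B) : PrecF (SAgrp A) (SAgrp B) := by
  obtain ⟨hApart, hAfin, -⟩ := hA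
  obtain ⟨⟨-, hBd, -⟩, hBfin, hBbig⟩ := hB
  have := hApart.countable.to_subtype
  have := (hApart.infinite hAfin).to_subtype
  obtain ⟨e⟩ : Nonempty (ℕ ⊕ ℕ ≃ A) := nonempty_equiv_of_countable
  set a : ℕ ⊕ ℕ → Set Ω := fun i => e i
  have haA : ∀ i, a i ∈ A := fun i => (e i).2
  have ha_inj : Injective a := Subtype.val_injective.comp e.injective
  have ha : Pairwise (Disjoint on a) := fun i j hij => hApart.2.1 (haA i) (haA j) (ha_inj.ne hij)
  have hcover : ⋃ i, a i = univ := by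
    rw [← hApart.2.2, sUnion_eq_iUnion]
    exact e.iSup_comp (g := fun s : A => (s : Set Ω))
  have hTc := compl_iUnion_inl_eq_iUnion_inr ha hcover
  have hT : ⋃ n, a (.inl n) = (⋃ n, a (.inr n))ᶜ := by rw [← hTc, compl_compl]
  obtain ⟨g₁, hg₁⟩ := exists_perm_forall_exists_mapsTo (a := fun n => a (.inl n))
    (fun m n hmn => ha (Sum.inl_injective.ne hmn)) (fun n => hAfin _ (haA _))
    (hTc ▸ infinite_iUnion (ha_inj.comp Sum.inr_injective)) hBd hBfin hBbig
  obtain ⟨g₂, hg₂⟩ := exists_perm_forall_exists_mapsTo (a := fun n => a (.inr n))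
    (fun m n hmn => ha (Sum.inr_injective.ne hmn)) (fun n => hAfin _ (haA _))
    (hT ▸ infinite_iUnion (ha_inj.comp Sum.inl_injective)) hBd hBfin hBbig
  refine ⟨{g₁, g₂}, toFinite _, fun f hf => ?_⟩
  have hf_sup := mem_pstab_sup_pstab hf (mem_iUnion_iff_of_mem_SAgrp hf fun n => haA (.inl n))
  nth_rw 2 [hT] at hf_sup
  exact sup_le (pstab_compl_iUnion_le_closure hBd (fun n => haA _) (by simp) hg₁)
    (pstab_compl_iUnion_le_closure hBd (fun n => haA _) (by simp) hg₂) hf_sup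

/-- (12) of Section 6: the subgroups `S_(A)`, `A ∈ 𝒫`, are mutually
`≈`-equivalent. -/
theorem stmt9 {Ω : Type u} [Countable Ω] [Infinite Ω] (A B : Set (Set Ω))
    (hA : MemP A) (hB : MemP B) : ApproxF (SAgrp A) (SAgrp B) :=
  ⟨precF_SAgrp_of_memP hA hB, precF_SAgrp_of_memP hB hA⟩
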